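/- Let G be a connected finite simple graph with at least two vertices and H a nonempty finite simple graph. Then the lexicographic product G∘H has a total dominating set and γ_t(G∘H) = γ_t(G). -/

import Mathlib

open SimpleGraph

/-- The lexicographic product of two simple graphs. -/
def SimpleGraph.lexProd {V W : Type*} (G : SimpleGraph V) (H : SimpleGraph W) :
    SimpleGraph (V × W) where
  Adj p q := G.Adj p.1 q.1 ∨ (p.1 = q.1 ∧ H.Adj p.2 q.2)
  symm := by
    constructor
    rintro p q (h | ⟨e, h⟩)
    · exact Or.inl h.symm
    · exact Or.inr ⟨e.symm, h.symm⟩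
  loopless := by
    constructor
    rintro p (h | ⟨_, h⟩)
    · exact G.irrefl h
    · exact H.irrefl h

/-- The `H`-layer of the product over a vertex `v` of `G`: all pairs with first
coordinate `v`. -/
def layer {V W : Type*} (v : V) : Set (V × W) := {p | p.1 = v}

/-- `S` is a `[1,k]`-set of `G`: every vertex outside `S` has at least `1` and at
most `k` neighbors in `S`. -/
def IsOneK {V : Type*} (G : SimpleGraph V) (k : ℕ) (S : Set V) : Prop :=
  ∀ v ∉ S, 1 ≤ (G.neighborSet v ∩ S).ncard ∧ (G.neighborSet v ∩ S).ncard ≤ k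

/-- `S` is a total `[1,k]`-set of `G`: every vertex has at least `1` and at most `k`
neighbors in `S`. -/
def IsTotalOneK {V : Type*} (G : SimpleGraph V) (k : ℕ) (S : Set V) : Prop :=
  ∀ v, 1 ≤ (G.neighborSet v ∩ S).ncard ∧ (G.neighborSet v ∩ S).ncard ≤ k

/-- `S` is an independent `[1,k]`-set of `G`. -/
def IsIndepOneK {V : Type*} (G : SimpleGraph V) (k : ℕ) (S : Set V) : Prop :=
  IsOneK G k S ∧ ∀ v ∈ S, ∀ w ∈ S, ¬ G.Adj v w

/-- `S` is `j`-dependent: every vertex of `S` has at most `j` neighbors in `S`. -/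
def IsJDep {V : Type*} (G : SimpleGraph V) (j : ℕ) (S : Set V) : Prop :=
  ∀ v ∈ S, (G.neighborSet v ∩ S).ncard ≤ j

/-- `S` is an efficient dominating set of `G`. -/
def IsEffDom {V : Type*} (G : SimpleGraph V) (S : Set V) : Prop :=
  (∀ v ∉ S, (G.neighborSet v ∩ S).ncard = 1) ∧ ∀ v ∈ S, (G.neighborSet v ∩ S).ncard = 0

/-- Membership in `SD^j_{[1,k]}(G)`: a `j`-dependent `[1,k]`-set such that every
vertex of `S` with no neighbor in `S` is at distance at least `3` from every other
vertex of `S`. -/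
def InSD {V : Type*} (G : SimpleGraph V) (k j : ℕ) (S : Set V) : Prop :=
  IsOneK G k S ∧ IsJDep G j S ∧
    ∀ v ∈ S, (G.neighborSet v ∩ S).ncard = 0 → ∀ v' ∈ S, v' ≠ v → 3 ≤ G.dist v v'

/-- The `[1,k]`-domination number `γ_{[1,k]}`. -/
noncomputable def gammaOneK {V : Type*} (G : SimpleGraph V) (k : ℕ) : ℕ :=
  sInf {n | ∃ S : Set V, IsOneK G k S ∧ S.ncard = n}

/-- The total `[1,k]`-domination number `γ_{t[1,k]}`. -/
noncomputable def gammaTotalOneK {V : Type*} (G : SimpleGraph V) (k : ℕ) : ℕ :=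
  sInf {n | ∃ S : Set V, IsTotalOneK G k S ∧ S.ncard = n}

/-- The `[1,k]`-independence number `γ_{i[1,k]}`. -/
noncomputable def gammaIndepOneK {V : Type*} (G : SimpleGraph V) (k : ℕ) : ℕ :=
  sInf {n | ∃ S : Set V, IsIndepOneK G k S ∧ S.ncard = n}

/-- `D` is a dominating set of `G`. -/
def IsDomSet {V : Type*} (G : SimpleGraph V) (D : Set V) : Prop :=
  ∀ v ∉ D, ∃ u ∈ D, G.Adj v u

/-- `D` is a total dominating set of `G`. -/
def IsTotalDomSet {V : Type*} (G : SimpleGraph V) (D : Set V) : Prop :=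
  ∀ v, ∃ u ∈ D, G.Adj v u

/-- The domination number `γ`. -/
noncomputable def gammaDom {V : Type*} (G : SimpleGraph V) : ℕ :=
  sInf {n | ∃ D : Set V, IsDomSet G D ∧ D.ncard = n}

/-- The total domination number `γ_t`. -/
noncomputable def gammaTotalDom {V : Type*} (G : SimpleGraph V) : ℕ :=
  sInf {n | ∃ D : Set V, IsTotalDomSet G D ∧ D.ncard = n}

/-!
A total dominating set `D` of `G` lifts to the total dominating set `D × {w}` of `G ∘ H`
of the same size. Conversely, let `D'` totally dominate `G ∘ H` and let `P` be its projection
to `G`. A vertex `v` of `G` with no neighbour in `P` can only be dominated inside its own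
layer, and the dominator of the dominator of `(v, w)` is then a second point of `D'` in that
layer. So choosing a transversal `S ⊆ D'` of the layers, every such `v` is the projection of a
point of `D' \ S`, and `P` together with one neighbour of each such `v` is a total dominating
set of `G` of size at most `|S| + |D' \ S| = |D'|`.
-/

open Set

namespace IsTotalDomSet

variable {V W : Type*} {G : SimpleGraph V}

theorem univ (hG : ∀ v, ∃ u, G.Adj v u) : IsTotalDomSet G Set.univ := fun v =>
  let ⟨u, hu⟩ := hG v
  ⟨u, mem_univ u, hu⟩

theorem image_lexProd {D : Set V} (hD : IsTotalDomSet G D) (H : SimpleGraph W) (w : W) :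
    IsTotalDomSet (G.lexProd H) ((·, w) '' D) := fun p =>
  let ⟨u, huD, hu⟩ := hD p.1
  ⟨(u, w), mem_image_of_mem _ huD, Or.inl hu⟩

theorem exists_ncard_le_of_lexProd (hG : ∀ v, ∃ u, G.Adj v u) {H : SimpleGraph W} (w : W)
    {D' : Set (V × W)} (hD' : IsTotalDomSet (G.lexProd H) D') (hfin : D'.Finite) :
    ∃ D, IsTotalDomSet G D ∧ D.ncard ≤ D'.ncard := by
  choose nbr hnbr using hG
  obtain ⟨S, hSD', hS⟩ := exists_subset_bijOn D' Prod.fst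
  refine ⟨Prod.fst '' D' ∪ nbr '' (Prod.fst '' (D' \ S)), fun v => ?_, ?_⟩
  · by_cases hv : ∃ p ∈ D', G.Adj v p.1
    · obtain ⟨p, hp, hvp⟩ := hv
      exact ⟨p.1, Or.inl (mem_image_of_mem _ hp), hvp⟩
    push Not at hv
    obtain ⟨q, hq, hvq | ⟨rfl, -⟩⟩ := hD' (v, w)
    · exact absurd hvq (hv q hq)
    obtain ⟨r, hr, hqr | ⟨hqr, hqr'⟩⟩ := hD' q
    · exact absurd hqr (hv r hr)
    have hqr_ne : q ≠ r := fun h => H.loopless.irrefl _ (h ▸ hqr')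
    have hout : q ∉ S ∨ r ∉ S := by
      by_contra! h
      exact hqr_ne (hS.injOn h.1 h.2 hqr)
    refine ⟨nbr q.1, Or.inr (mem_image_of_mem _ ?_), hnbr _⟩
    rcases hout with hq' | hr'
    · exact ⟨q, ⟨hq, hq'⟩, rfl⟩
    · exact ⟨r, ⟨hr, hr'⟩, hqr.symm⟩
  · calc (Prod.fst '' D' ∪ nbr '' (Prod.fst '' (D' \ S))).ncard
        ≤ (Prod.fst '' D').ncard + (nbr '' (Prod.fst '' (D' \ S))).ncard := ncard_union_le _ _
      _ ≤ S.ncard + (D' \ S).ncard := by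
          gcongr
          · rw [← hS.image_eq, hS.injOn.ncard_image]
          · exact (ncard_image_le (hfin.sdiff.image _)).trans (ncard_image_le hfin.sdiff)
      _ = D'.ncard := by rw [add_comm, ncard_sdiff_add_ncard_of_subset hSD' hfin]

end IsTotalDomSet

theorem gammaTotalDom_le {V : Type*} {G : SimpleGraph V} {D : Set V}
    (hD : IsTotalDomSet G D) : gammaTotalDom G ≤ D.ncard :=
  Nat.sInf_le ⟨D, hD, rfl⟩

theorem exists_isTotalDomSet_ncard_eq_gammaTotalDom {V : Type*} {G : SimpleGraph V}
    {D : Set V} (hD : IsTotalDomSet G D) :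
    ∃ D, IsTotalDomSet G D ∧ D.ncard = gammaTotalDom G :=
  Nat.sInf_mem (s := {n | ∃ D : Set V, IsTotalDomSet G D ∧ D.ncard = n}) ⟨_, D, hD, rfl⟩

/-- Let `G` be connected with at least two vertices and `H` nonempty.
Then `G∘H` has a total dominating set and `γ_t(G∘H) = γ_t(G)`. -/
theorem stmt17 {V W : Type*} [Fintype V] [Fintype W] (G : SimpleGraph V)
    (H : SimpleGraph W) (hconn : G.Connected) (hcard : 2 ≤ Fintype.card V)
    (hW : Nonempty W) :
    (∃ D : Set (V × W), IsTotalDomSet (G.lexProd H) D) ∧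
      gammaTotalDom (G.lexProd H) = gammaTotalDom G := by
  obtain ⟨w⟩ := hW
  have : Nontrivial V := Fintype.one_lt_card_iff_nontrivial.mp hcard
  have hG : ∀ v, ∃ u, G.Adj v u := hconn.preconnected.exists_adj_of_nontrivial
  have hGH := (IsTotalDomSet.univ hG).image_lexProd H w
  refine ⟨⟨_, hGH⟩, le_antisymm ?_ ?_⟩
  · obtain ⟨D, hD, hDcard⟩ := exists_isTotalDomSet_ncard_eq_gammaTotalDom
      (IsTotalDomSet.univ hG)
    calc gammaTotalDom (G.lexProd H)
        ≤ ((·, w) '' D).ncard := gammaTotalDom_le (hD.image_lexProd H w)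
      _ = gammaTotalDom G := by rw [ncard_image_of_injective _ (Prod.mk_left_injective w), hDcard]
  · obtain ⟨D', hD', hD'card⟩ := exists_isTotalDomSet_ncard_eq_gammaTotalDom hGH
    obtain ⟨D, hD, hle⟩ := hD'.exists_ncard_le_of_lexProd hG w D'.toFinite
    exact (gammaTotalDom_le hD).trans (hle.trans hD'card.le)
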